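/- Let B be the incidence matrix of an SBIBD(v,k,λ) and set S = x·B + y·(J - B). If λx² + 2(k-λ)xy + (v-2k+λ)y² = 0, then S·Sᵀ = ω·I where ω = kx² + (v-k)y², and |det(S)| = ω^(v/2). -/

import Mathlib

/-!
Write `S = (x - y) B + y J`. Since `B J = J Bᵀ = k J` and `J² = v J`, the Gram matrix is
`S Sᵀ = (x - y)² (k - l) I + c J`, where `c` is the left-hand side of the hypothesis on `x, y`.
So `c = 0` gives `S Sᵀ = ω I`, hence `det(S)² = ω^v`, and `ω ≥ 0` as a diagonal entry of `S Sᵀ`.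
-/

open Matrix

/-- The all-ones matrix J. -/
def allOnes (n : ℕ) : Matrix (Fin n) (Fin n) ℝ := Matrix.of fun _ _ => 1

section allOnes

variable {n : ℕ}

@[simp]
lemma transpose_allOnes : (allOnes n)ᵀ = allOnes n := rfl

lemma allOnes_mul_allOnes : allOnes n * allOnes n = (n : ℝ) • allOnes n := by
  ext i j
  simp [allOnes, mul_apply]

lemma mul_allOnes_of_sum_row_eq {B : Matrix (Fin n) (Fin n) ℝ} {r : ℝ}
    (hrow : ∀ i, ∑ j, B i j = r) : B * allOnes n = r • allOnes n := by
  ext i j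
  simp [allOnes, mul_apply, hrow]

lemma allOnes_mul_transpose_of_sum_row_eq {B : Matrix (Fin n) (Fin n) ℝ} {r : ℝ}
    (hrow : ∀ i, ∑ j, B i j = r) : allOnes n * Bᵀ = r • allOnes n := by
  rw [← transpose_allOnes, ← transpose_mul, mul_allOnes_of_sum_row_eq hrow, transpose_smul,
    transpose_allOnes]

end allOnes

lemma abs_det_eq_rpow_of_mul_transpose_eq_smul_one {ι : Type*} [Fintype ι] [DecidableEq ι]
    {S : Matrix ι ι ℝ} {ω : ℝ} (h : S * Sᵀ = ω • 1) :
    |S.det| = ω ^ ((Fintype.card ι : ℝ) / 2) := by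
  have hdet : S.det ^ 2 = ω ^ Fintype.card ι := by
    simpa [det_mul, det_transpose, det_smul, ← sq] using congrArg det h
  rcases isEmpty_or_nonempty ι with hι | ⟨⟨i⟩⟩
  · simp
  have hω : 0 ≤ ω := by
    have hii := congrFun (congrFun h i) i
    simp only [mul_apply, transpose_apply, Matrix.smul_apply, one_apply_eq, smul_eq_mul,
      mul_one] at hii
    exact hii ▸ Finset.sum_nonneg fun m _ => mul_self_nonneg (S i m)
  rw [← Real.sqrt_sq_eq_abs, hdet, Real.sqrt_eq_rpow, ← Real.rpow_natCast, ← Real.rpow_mul hω]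
  ring_nf

lemma mul_transpose_linear_combination_allOnes {v : ℕ} {k l x y : ℝ}
    {B : Matrix (Fin v) (Fin v) ℝ}
    (hBBt : B * Bᵀ = (k - l) • (1 : Matrix (Fin v) (Fin v) ℝ) + l • allOnes v)
    (hrow : ∀ i, ∑ j, B i j = k) :
    (x • B + y • (allOnes v - B)) * (x • B + y • (allOnes v - B))ᵀ =
      ((x - y) ^ 2 * (k - l)) • (1 : Matrix (Fin v) (Fin v) ℝ) +
        (l * x ^ 2 + 2 * (k - l) * x * y + (v - 2 * k + l) * y ^ 2) • allOnes v := by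
  have hcomb : x • B + y • (allOnes v - B) = (x - y) • B + y • allOnes v := by module
  rw [hcomb]
  simp only [transpose_add, transpose_smul, transpose_allOnes, add_mul, mul_add, smul_mul_smul,
    hBBt, mul_allOnes_of_sum_row_eq hrow, allOnes_mul_transpose_of_sum_row_eq hrow,
    allOnes_mul_allOnes]
  module

theorem stmt_3_general (v k l : ℕ) (x y : ℝ)
    (B : Matrix (Fin v) (Fin v) ℝ)
    (hBBt : B * Bᵀ = ((k:ℝ) - l) • (1 : Matrix (Fin v) (Fin v) ℝ) + (l:ℝ) • allOnes v)
    (hrow : ∀ i, ∑ j, B i j = (k : ℝ))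
    (hchar : (l:ℝ) * x ^ 2 + 2 * ((k:ℝ) - l) * x * y + ((v:ℝ) - 2 * k + l) * y ^ 2 = 0)
    (S : Matrix (Fin v) (Fin v) ℝ)
    (hS : S = x • B + y • (allOnes v - B)) :
    S * Sᵀ = ((k:ℝ) * x ^ 2 + ((v:ℝ) - k) * y ^ 2) • (1 : Matrix (Fin v) (Fin v) ℝ) ∧
      |S.det| = ((k:ℝ) * x ^ 2 + ((v:ℝ) - k) * y ^ 2) ^ ((v:ℝ)/2) := by
  have hgram :
      S * Sᵀ = ((k:ℝ) * x ^ 2 + ((v:ℝ) - k) * y ^ 2) • (1 : Matrix (Fin v) (Fin v) ℝ) := by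
    rw [hS, mul_transpose_linear_combination_allOnes hBBt hrow, hchar, zero_smul, add_zero]
    congr 1
    linear_combination -hchar
  refine ⟨hgram, ?_⟩
  simpa using abs_det_eq_rpow_of_mul_transpose_eq_smul_one hgram

theorem stmt_3 (v k l : ℕ) (x y : ℝ)
    (B : Matrix (Fin v) (Fin v) ℝ)
    (h01 : ∀ i j, B i j = 0 ∨ B i j = 1)
    (hBBt : B * Bᵀ = ((k:ℝ) - l) • (1 : Matrix (Fin v) (Fin v) ℝ) + (l:ℝ) • allOnes v)
    (hrow : ∀ i, ∑ j, B i j = (k : ℝ))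
    (hfisher : (l:ℝ) * ((v:ℝ) - 1) = (k:ℝ) * ((k:ℝ) - 1))
    (hchar : (l:ℝ) * x ^ 2 + 2 * ((k:ℝ) - l) * x * y + ((v:ℝ) - 2 * k + l) * y ^ 2 = 0)
    (S : Matrix (Fin v) (Fin v) ℝ)
    (hS : S = x • B + y • (allOnes v - B)) :
    S * Sᵀ = ((k:ℝ) * x ^ 2 + ((v:ℝ) - k) * y ^ 2) • (1 : Matrix (Fin v) (Fin v) ℝ) ∧
      |S.det| = ((k:ℝ) * x ^ 2 + ((v:ℝ) - k) * y ^ 2) ^ ((v:ℝ)/2) :=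
  stmt_3_general v k l x y B hBBt hrow hchar S hS
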